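/- arXiv:1505.07986 — 2 statements merged into one kernel-verified Lean document; each statement's English description precedes it below -/
import Mathlib

section
/- Suppose γ : I → ℍⁿ is a horizontal curve. Then the Lipschitz constant of γ with respect to the Carnot–Carathéodory distance on the target equals the Lipschitz constant of p ∘ γ with respect to the Euclidean distance: Lip_ℍ(γ) = Lip_𝔼(p ∘ γ). -/
open MeasureTheory Filter Set

noncomputable section

/-- The underlying space of the Heisenberg group `ℍⁿ = ℝ^{2n+1}` with the Euclidean structure. -/
abbrev H (n : ℕ) : Type := EuclideanSpace ℝ (Fin (2*n+1))

namespace Heis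

variable (n : ℕ)

/-- Index of the `i`-th coordinate of the first block `a ∈ ℝⁿ`. -/
def idx₁ (i : Fin n) : Fin (2*n+1) := ⟨i.1, by have := i.2; omega⟩

/-- Index of the `i`-th coordinate of the second block `b ∈ ℝⁿ`. -/
def idx₂ (i : Fin n) : Fin (2*n+1) := ⟨n + i.1, by have := i.2; omega⟩

/-- Index of the last (vertical) coordinate `c`. -/
def idxc : Fin (2*n+1) := ⟨2*n, by omega⟩

/-- Projection `p : ℍⁿ → ℝ^{2n}` onto the first `2n` coordinates. -/
def proj (x : H n) : EuclideanSpace ℝ (Fin (2*n)) :=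
  WithLp.toLp 2 (fun k => x ⟨k.1, by have := k.2; omega⟩)

/-- The Euclidean inner product. -/
def iprod {m : ℕ} (x y : EuclideanSpace ℝ (Fin m)) : ℝ := ∑ k, x k * y k

/-- The Heisenberg group law
`(a,b,c)·(a',b',c') = (a+a', b+b', c+c'−2(⟨a,b'⟩−⟨b,a'⟩))`. -/
def Hmul (x y : H n) : H n := WithLp.toLp 2 (fun k =>
  x k + y k - (if (k : ℕ) = 2*n then
    2 * ∑ i : Fin n, (x (idx₁ n i) * y (idx₂ n i) - x (idx₂ n i) * y (idx₁ n i)) else 0))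

/-- Dilations `δ_r(a,b,c) = (ra, rb, r²c)`. -/
def dil (r : ℝ) (x : H n) : H n :=
  WithLp.toLp 2 (fun k => if (k : ℕ) = 2*n then r^2 * x k else r * x k)

/-- The horizontal vector field `X_i(a,b,c) = e_i + 2 b_i e_{2n+1}`. -/
def Xvf (i : Fin n) (x : H n) : H n :=
  EuclideanSpace.single (idx₁ n i) 1 + (2 * x (idx₂ n i)) • EuclideanSpace.single (idxc n) 1

/-- The horizontal vector field `Y_i(a,b,c) = e_{n+i} − 2 a_i e_{2n+1}`. -/
def Yvf (i : Fin n) (x : H n) : H n :=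
  EuclideanSpace.single (idx₂ n i) 1 - (2 * x (idx₁ n i)) • EuclideanSpace.single (idxc n) 1

/-- `E ∈ V = Span{X_i, Y_i : 1 ≤ i ≤ n}`. -/
def memV (E : H n → H n) : Prop :=
  ∃ q q' : Fin n → ℝ, ∀ x, E x = ∑ i, (q i • Xvf n i x + q' i • Yvf n i x)

/-- The norm `ω` on `V` making `{X_i, Y_i}` orthonormal; equivalently `ω(E) = |p(E)|`. -/
def omega (E : H n → H n) : ℝ := ‖proj n (E 0)‖

/-- `γ` is absolutely continuous on `I`: differentiable a.e. on `I` and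
`γ(t) − γ(s) = ∫_s^t γ'` for all `s, t ∈ I`. -/
def IsAC (I : Set ℝ) (γ : ℝ → H n) : Prop :=
  (∀ᵐ t ∂(volume.restrict I), DifferentiableAt ℝ γ t) ∧
  ∀ s ∈ I, ∀ t ∈ I, IntervalIntegrable (deriv γ) volume s t ∧
    γ t - γ s = ∫ u in s..t, deriv γ u

/-- The pointwise horizontality condition
`γ'(t) = ∑ᵢ (hᵢ(t) Xᵢ(γ(t)) + h_{n+i}(t) Yᵢ(γ(t)))`. -/
def horizCondition (γ : ℝ → H n) (h : ℝ → Fin (2*n) → ℝ) (t : ℝ) : Prop :=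
  deriv γ t = ∑ i : Fin n,
    (h t ⟨i.1, by have := i.2; omega⟩ • Xvf n i (γ t)
      + h t ⟨n + i.1, by have := i.2; omega⟩ • Yvf n i (γ t))

/-- `γ` satisfies the horizontality condition a.e. on `I` for some `h : I → ℝ^{2n}`. -/
def IsHorizontal (I : Set ℝ) (γ : ℝ → H n) : Prop :=
  ∃ h : ℝ → Fin (2*n) → ℝ, ∀ᵐ t ∂(volume.restrict I), horizCondition n γ h t

/-- A horizontal curve: absolutely continuous and horizontal on `I`. -/
def IsHorizontalCurve (I : Set ℝ) (γ : ℝ → H n) : Prop :=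
  IsAC n I γ ∧ IsHorizontal n I γ

/-- The horizontal length `L_ℍ(γ) = ∫_I |h| = ∫_I |(p ∘ γ)'|`. -/
def hLength (I : Set ℝ) (γ : ℝ → H n) : ℝ := ∫ t in I, ‖proj n (deriv γ t)‖

/-- The Carnot–Carathéodory distance:
the infimum of horizontal lengths of horizontal curves joining `x` to `y`. -/
def ccDist (x y : H n) : ℝ :=
  sInf {L | ∃ (a b : ℝ) (γ : ℝ → H n), a < b ∧ IsHorizontalCurve n (Set.Icc a b) γ ∧
    γ a = x ∧ γ b = y ∧ L = hLength n (Set.Icc a b) γ}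

/-- `f` is Lipschitz with respect to the Carnot–Carathéodory distance. -/
def LipschitzCC (f : H n → ℝ) : Prop :=
  ∃ K : ℝ, 0 ≤ K ∧ ∀ x y, |f x - f y| ≤ K * ccDist n x y

/-- The Lipschitz constant `Lip_ℍ(f)` with respect to the Carnot–Carathéodory distance. -/
def lipH (f : H n → ℝ) : ℝ :=
  sInf {K | 0 ≤ K ∧ ∀ x y, |f x - f y| ≤ K * ccDist n x y}

/-- The directional derivative `Ef(x) = lim_{t→0} (f(x + tE(x)) − f(x))/t` exists and is `D`. -/
def HasDirDeriv (f : H n → ℝ) (E : H n → H n) (x : H n) (D : ℝ) : Prop :=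
  Tendsto (fun t : ℝ => (f (x + t • E x) - f x) / t) (nhdsWithin 0 {(0:ℝ)}ᶜ) (nhds D)

/-- `L : ℍⁿ → ℝ` is ℍ-linear: `L(xy) = L(x)+L(y)` and `L(δ_r x) = r L(x)` for `r > 0`. -/
def IsHLinear (L : H n → ℝ) : Prop :=
  (∀ x y, L (Hmul n x y) = L x + L y) ∧ ∀ r : ℝ, 0 < r → ∀ x, L (dil n r x) = r * L x

/-- `f` is Pansu differentiable at `x` with (ℍ-linear) Pansu derivative `L`:
`lim_{y→x} |f(y) − f(x) − L(x⁻¹y)|/d(x,y) = 0`, where `x⁻¹ = −x`. -/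
def PansuDiffAt (f : H n → ℝ) (x : H n) (L : H n → ℝ) : Prop :=
  IsHLinear n L ∧
  Tendsto (fun y => |f y - f x - L (Hmul n (-x) y)| / ccDist n x y)
    (nhdsWithin x {x}ᶜ) (nhds 0)

/-- `x ∈ ℚ^{2n+1}`: all coordinates rational. -/
def isRat (x : H n) : Prop := ∀ k, ∃ q : ℚ, x k = (q : ℝ)

/-- Build the point `(a, b, c) ∈ ℍⁿ` from `a, b ∈ ℝⁿ` and `c ∈ ℝ`. -/
def mkH (a b : Fin n → ℝ) (c : ℝ) : H n := WithLp.toLp 2 (fun k =>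
  if h : (k : ℕ) < n then a ⟨k.1, h⟩
  else if h' : (k : ℕ) < 2*n then b ⟨k.1 - n, by omega⟩ else c)

/-- First segment direction `(a − bc/L², b + ac/L², 0)` of the good curve to `y = (a,b,c)`. -/
def w₁ (y : H n) : H n :=
  mkH n (fun i => y (idx₁ n i) - y (idx₂ n i) * y (idxc n) / ‖proj n y‖^2)
        (fun i => y (idx₂ n i) + y (idx₁ n i) * y (idxc n) / ‖proj n y‖^2) 0

/-- Second segment direction `(a + bc/L², b − ac/L², 2c)` of the good curve to `y = (a,b,c)`. -/
def w₂ (y : H n) : H n :=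
  mkH n (fun i => y (idx₁ n i) + y (idx₂ n i) * y (idxc n) / ‖proj n y‖^2)
        (fun i => y (idx₂ n i) - y (idx₁ n i) * y (idxc n) / ‖proj n y‖^2) (2 * y (idxc n))

/-- The piecewise-linear horizontal curve `γ_y` joining `0` to `y`. -/
def goodCurve (y : H n) : ℝ → H n := fun t =>
  if t ≤ 1/2 then t • w₁ n y else (1/2 : ℝ) • w₁ n y + (t - 1/2) • w₂ n y

end Heis


/-- Lipschitz constant of a curve `I → ℍⁿ` with respect to the Carnot–Carathéodory
distance on the target. -/
def lipOnCC (n : ℕ) (I : Set ℝ) (γ : ℝ → H n) : ℝ :=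
  sInf {K | 0 ≤ K ∧ ∀ s ∈ I, ∀ t ∈ I, Heis.ccDist n (γ s) (γ t) ≤ K * |s - t|}

/-- Lipschitz constant of a curve `I → ℝ^{2n}` with respect to the Euclidean
distance on the target. -/
def lipOnE (n : ℕ) (I : Set ℝ) (g : ℝ → EuclideanSpace ℝ (Fin (2*n))) : ℝ :=
  sInf {K | 0 ≤ K ∧ ∀ s ∈ I, ∀ t ∈ I, ‖g s - g t‖ ≤ K * |s - t|}

/-!
The horizontal length of a curve is the Euclidean length of its projection `p ∘ γ`. Hence
`|p y - p x| ≤ d(x, y)` for any two points joined by a horizontal curve, which gives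
`Lip_𝔼(p ∘ γ) ≤ Lip_ℍ(γ)`. Conversely, if `p ∘ γ` is `K`-Lipschitz then `|(p ∘ γ)'| ≤ K` a.e.,
so the restriction of `γ` to `[s, t]` is a competitor for `d(γ s, γ t)` of horizontal length at
most `K (t - s)`; for `s > t` one uses the reversed curve `u ↦ γ (s + t - u)` instead.
-/

namespace Heis

variable {n : ℕ}

def projCLM (n : ℕ) : H n →L[ℝ] EuclideanSpace ℝ (Fin (2*n)) :=
  LinearMap.toContinuousLinearMap
  { toFun := proj n
    map_add' := fun x y => by ext k; simp [proj]
    map_smul' := fun c x => by ext k; simp [proj] }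

@[simp]
lemma projCLM_apply (x : H n) : projCLM n x = proj n x := rfl

lemma ae_restrict_Icc_comp_const_sub {a b : ℝ} {P : ℝ → Prop}
    (h : ∀ᵐ t ∂volume.restrict (Icc a b), P t) :
    ∀ᵐ u ∂volume.restrict (Icc a b), P (a + b - u) := by
  have hpre : (fun u : ℝ => a + b - u) ⁻¹' Icc a b = Icc a b := by
    rw [preimage_const_sub_Icc]; congr 1 <;> ring
  have hmp := (Measure.measurePreserving_sub_left volume (a + b)).restrict_preimage
    (measurableSet_Icc (a := a) (b := b))
  rw [hpre] at hmp
  exact hmp.quasiMeasurePreserving.ae h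

lemma IsHorizontalCurve.mono {I J : Set ℝ} {γ : ℝ → H n} (h : IsHorizontalCurve n I γ)
    (hJI : J ⊆ I) : IsHorizontalCurve n J γ := by
  obtain ⟨⟨hdiff, hint⟩, hor, hhor⟩ := h
  exact ⟨⟨ae_restrict_of_ae_restrict_of_subset hJI hdiff,
    fun s hs t ht => hint s (hJI hs) t (hJI ht)⟩,
    hor, ae_restrict_of_ae_restrict_of_subset hJI hhor⟩

lemma IsAC.comp_const_sub {a b : ℝ} {γ : ℝ → H n} (h : IsAC n (Icc a b) γ) :
    IsAC n (Icc a b) (fun u => γ (a + b - u)) := by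
  set c := a + b
  have hmem : ∀ u ∈ Icc a b, c - u ∈ Icc a b := fun u hu =>
    ⟨by linarith [hu.2], by linarith [hu.1]⟩
  have hderiv : deriv (fun u => γ (c - u)) = fun u => -deriv γ (c - u) :=
    funext (deriv_comp_const_sub γ c)
  obtain ⟨hdiff, hint⟩ := h
  refine ⟨?_, fun s hs t ht => ?_⟩
  · filter_upwards [ae_restrict_Icc_comp_const_sub hdiff] with u hu
    exact hu.comp u ((differentiableAt_const c).sub differentiableAt_id)
  obtain ⟨hii, heq⟩ := hint (c - s) (hmem s hs) (c - t) (hmem t ht)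
  have hii' : IntervalIntegrable (fun u => deriv γ (c - u)) volume s t := by
    simpa only [sub_sub_cancel] using hii.comp_sub_left c
  rw [hderiv]
  refine ⟨hii'.neg, ?_⟩
  rw [intervalIntegral.integral_neg, intervalIntegral.integral_comp_sub_left, heq,
    intervalIntegral.integral_symm]

lemma IsHorizontal.comp_const_sub {a b : ℝ} {γ : ℝ → H n} (h : IsHorizontal n (Icc a b) γ) :
    IsHorizontal n (Icc a b) (fun u => γ (a + b - u)) := by
  obtain ⟨hor, hhor⟩ := h
  refine ⟨fun u k => -hor (a + b - u) k, ?_⟩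
  filter_upwards [ae_restrict_Icc_comp_const_sub hhor] with u hu
  rw [horizCondition, deriv_comp_const_sub, hu, ← Finset.sum_neg_distrib]
  simp only [neg_add, neg_smul]

lemma IsHorizontalCurve.comp_const_sub {a b : ℝ} {γ : ℝ → H n}
    (h : IsHorizontalCurve n (Icc a b) γ) :
    IsHorizontalCurve n (Icc a b) (fun u => γ (a + b - u)) :=
  ⟨h.1.comp_const_sub, h.2.comp_const_sub⟩

lemma hLength_nonneg (S : Set ℝ) (γ : ℝ → H n) : 0 ≤ hLength n S γ :=
  integral_nonneg fun _ => norm_nonneg _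

lemma IsAC.norm_proj_sub_le_hLength {a b : ℝ} {γ : ℝ → H n} (hab : a ≤ b)
    (h : IsAC n (Icc a b) γ) : ‖proj n (γ b) - proj n (γ a)‖ ≤ hLength n (Icc a b) γ := by
  obtain ⟨hint, heq⟩ := h.2 a (left_mem_Icc.2 hab) b (right_mem_Icc.2 hab)
  have hftc : proj n (γ b) - proj n (γ a) = ∫ u in a..b, proj n (deriv γ u) := by
    simp only [← projCLM_apply, ← map_sub, heq, (projCLM n).intervalIntegral_comp_comm hint]
  calc ‖proj n (γ b) - proj n (γ a)‖
      ≤ ∫ u in a..b, ‖proj n (deriv γ u)‖ := by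
        rw [hftc]; exact intervalIntegral.norm_integral_le_integral_norm hab
    _ = hLength n (Icc a b) γ := by
        rw [intervalIntegral.integral_of_le hab, hLength, integral_Icc_eq_integral_Ioc]

lemma hLength_le_of_norm_proj_sub_le {a b K : ℝ} {γ : ℝ → H n} (hab : a ≤ b)
    (hdiff : ∀ᵐ u ∂volume.restrict (Icc a b), DifferentiableAt ℝ γ u) (hK : 0 ≤ K)
    (hlip : ∀ x ∈ Icc a b, ∀ y ∈ Icc a b, ‖proj n (γ x) - proj n (γ y)‖ ≤ K * |x - y|) :
    hLength n (Icc a b) γ ≤ K * (b - a) := by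
  have hLip : LipschitzOnWith K.toNNReal (fun t => projCLM n (γ t)) (Icc a b) :=
    LipschitzOnWith.of_dist_le' fun x hx y hy => by simpa [dist_eq_norm] using hlip x hx y hy
  have hbound : ∀ᵐ u ∂volume.restrict (Icc a b), ‖‖proj n (deriv γ u)‖‖ ≤ K := by
    rw [← Measure.restrict_congr_set Ioo_ae_eq_Icc] at hdiff ⊢
    filter_upwards [hdiff, ae_restrict_mem measurableSet_Ioo] with u hu huI
    have hderiv : deriv (fun t => projCLM n (γ t)) u = projCLM n (deriv γ u) :=
      ((projCLM n).hasFDerivAt.comp_hasDerivAt u hu.hasDerivAt).deriv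
    rw [norm_norm, ← projCLM_apply, ← hderiv, ← Real.coe_toNNReal K hK]
    exact norm_deriv_le_of_lipschitzOn (Icc_mem_nhds huI.1 huI.2) hLip
  calc hLength n (Icc a b) γ = ‖hLength n (Icc a b) γ‖ :=
        (Real.norm_of_nonneg (hLength_nonneg _ _)).symm
    _ ≤ K * volume.real (Icc a b) :=
        norm_setIntegral_le_of_norm_le_const_ae measure_Icc_lt_top hbound
    _ = K * (b - a) := by rw [Real.volume_real_Icc_of_le hab]

def curveLengths (n : ℕ) (x y : H n) : Set ℝ :=
  {L | ∃ (a b : ℝ) (γ : ℝ → H n), a < b ∧ IsHorizontalCurve n (Icc a b) γ ∧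
    γ a = x ∧ γ b = y ∧ L = hLength n (Icc a b) γ}

lemma hLength_mem_curveLengths {a b : ℝ} {γ : ℝ → H n} (hab : a < b)
    (h : IsHorizontalCurve n (Icc a b) γ) : hLength n (Icc a b) γ ∈ curveLengths n (γ a) (γ b) :=
  ⟨a, b, γ, hab, h, rfl, rfl, rfl⟩

lemma bddBelow_curveLengths (x y : H n) : BddBelow (curveLengths n x y) :=
  ⟨0, by rintro L ⟨a, b, γ, -, -, -, -, rfl⟩; exact hLength_nonneg _ _⟩

lemma ccDist_le_hLength {a b : ℝ} {γ : ℝ → H n} (hab : a < b)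
    (h : IsHorizontalCurve n (Icc a b) γ) : ccDist n (γ a) (γ b) ≤ hLength n (Icc a b) γ :=
  csInf_le (bddBelow_curveLengths _ _) (hLength_mem_curveLengths hab h)

lemma norm_proj_sub_le_ccDist {x y : H n} (hne : (curveLengths n x y).Nonempty) :
    ‖proj n y - proj n x‖ ≤ ccDist n x y := by
  refine le_csInf hne ?_
  rintro L ⟨a, b, γ, hab, hγ, rfl, rfl, rfl⟩
  exact hγ.1.norm_proj_sub_le_hLength hab.le

lemma ccDist_self (x : H n) : ccDist n x x = 0 := by
  have hconst : IsHorizontalCurve n (Icc 0 1) (fun _ : ℝ => x) := by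
    refine ⟨⟨ae_of_all _ fun _ => differentiableAt_const x, fun s _ t _ => ?_⟩,
      fun _ _ => 0, ae_of_all _ fun t => ?_⟩
    · simp
    · simp [horizCondition]
  refine le_antisymm ?_ <|
    Real.sInf_nonneg fun L ⟨_, _, _, _, _, _, _, hL⟩ => hL ▸ hLength_nonneg _ _
  simpa [hLength, ← projCLM_apply] using ccDist_le_hLength one_pos hconst

lemma IsHorizontalCurve.norm_proj_sub_le_of_ccDist_le {I : Set ℝ} (hI : I.OrdConnected)
    {γ : ℝ → H n} (hγ : IsHorizontalCurve n I γ) {K : ℝ}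
    (hlip : ∀ s ∈ I, ∀ t ∈ I, ccDist n (γ s) (γ t) ≤ K * |s - t|) :
    ∀ s ∈ I, ∀ t ∈ I, ‖proj n (γ s) - proj n (γ t)‖ ≤ K * |s - t| := by
  intro s hs t ht
  wlog hst : s < t generalizing s t
  · rcases (not_lt.1 hst).eq_or_lt with rfl | hts
    · simp
    · rw [norm_sub_rev, abs_sub_comm]; exact this t ht s hs hts
  calc ‖proj n (γ s) - proj n (γ t)‖ = ‖proj n (γ t) - proj n (γ s)‖ := norm_sub_rev _ _
    _ ≤ ccDist n (γ s) (γ t) :=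
        norm_proj_sub_le_ccDist ⟨_, hLength_mem_curveLengths hst (hγ.mono (hI.out hs ht))⟩
    _ ≤ K * |s - t| := hlip s hs t ht

lemma IsHorizontalCurve.ccDist_le_of_norm_proj_sub_le_Icc {a b K : ℝ} {γ : ℝ → H n}
    (hab : a < b) (hγ : IsHorizontalCurve n (Icc a b) γ) (hK : 0 ≤ K)
    (hlip : ∀ x ∈ Icc a b, ∀ y ∈ Icc a b, ‖proj n (γ x) - proj n (γ y)‖ ≤ K * |x - y|) :
    ccDist n (γ a) (γ b) ≤ K * (b - a) :=
  (ccDist_le_hLength hab hγ).trans (hLength_le_of_norm_proj_sub_le hab.le hγ.1.1 hK hlip)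

lemma IsHorizontalCurve.ccDist_le_of_norm_proj_sub_le_Icc' {a b K : ℝ} {γ : ℝ → H n}
    (hab : a < b) (hγ : IsHorizontalCurve n (Icc a b) γ) (hK : 0 ≤ K)
    (hlip : ∀ x ∈ Icc a b, ∀ y ∈ Icc a b, ‖proj n (γ x) - proj n (γ y)‖ ≤ K * |x - y|) :
    ccDist n (γ b) (γ a) ≤ K * (b - a) := by
  have hmem : ∀ u ∈ Icc a b, a + b - u ∈ Icc a b := fun u hu =>
    ⟨by linarith [hu.2], by linarith [hu.1]⟩
  have hlip' : ∀ x ∈ Icc a b, ∀ y ∈ Icc a b,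
      ‖proj n (γ (a + b - x)) - proj n (γ (a + b - y))‖ ≤ K * |x - y| := fun x hx y hy =>
    (hlip _ (hmem x hx) _ (hmem y hy)).trans_eq (by rw [← abs_neg]; ring_nf)
  simpa only [add_sub_cancel_left, add_sub_cancel_right] using
    hγ.comp_const_sub.ccDist_le_of_norm_proj_sub_le_Icc hab hK hlip'

lemma IsHorizontalCurve.ccDist_le_of_norm_proj_sub_le {I : Set ℝ} (hI : I.OrdConnected)
    {γ : ℝ → H n} (hγ : IsHorizontalCurve n I γ) {K : ℝ} (hK : 0 ≤ K)
    (hlip : ∀ s ∈ I, ∀ t ∈ I, ‖proj n (γ s) - proj n (γ t)‖ ≤ K * |s - t|) :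
    ∀ s ∈ I, ∀ t ∈ I, ccDist n (γ s) (γ t) ≤ K * |s - t| := by
  intro s hs t ht
  rcases lt_trichotomy s t with hst | rfl | hts
  · have hsub := hI.out hs ht
    rw [abs_sub_comm, abs_of_pos (sub_pos.2 hst)]
    exact (hγ.mono hsub).ccDist_le_of_norm_proj_sub_le_Icc hst hK
      fun x hx y hy => hlip x (hsub hx) y (hsub hy)
  · simp [ccDist_self]
  · have hsub := hI.out ht hs
    rw [abs_of_pos (sub_pos.2 hts)]
    exact (hγ.mono hsub).ccDist_le_of_norm_proj_sub_le_Icc' hts hK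
      fun x hx y hy => hlip x (hsub hx) y (hsub hy)

end Heis

theorem statement2_general (n : ℕ) (I : Set ℝ) (hI : I.OrdConnected)
    (γ : ℝ → H n) (hγ : Heis.IsHorizontalCurve n I γ) :
    lipOnCC n I γ = lipOnE n I (fun t => Heis.proj n (γ t)) := by
  unfold lipOnCC lipOnE
  congr 1
  ext K
  exact and_congr_right fun hK =>
    ⟨hγ.norm_proj_sub_le_of_ccDist_le hI, hγ.ccDist_le_of_norm_proj_sub_le hI hK⟩

/-- Lemma `lipschitzhorizontal`. If `γ : I → ℍⁿ` is a horizontal curve,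
then `Lip_ℍ(γ) = Lip_𝔼(p ∘ γ)`. -/
theorem statement2 (n : ℕ) (hn : 0 < n) (I : Set ℝ) (hI : I.OrdConnected)
    (γ : ℝ → H n) (hγ : Heis.IsHorizontalCurve n I γ) :
    lipOnCC n I γ = lipOnE n I (fun t => Heis.proj n (γ t)) :=
  statement2_general n I hI γ hγ
end
end

section
/- There exists a set N ⊂ ℍⁿ which has Lebesgue measure zero (with respect to Lebesgue measure on ℝ^{2n+1}), is a countable intersection of open sets (G_δ), and contains every straight line segment in ℝ^{2n+1} which is a horizontal curve and joins two points of ℚ^{2n+1}. Moreover, any such set N contains: (1) the image of the line t ↦ x + tE(x) whenever x ∈ ℚ^{2n+1} and E ∈ V is a linear combination of {X_i, Y_i : 1 ≤ i ≤ n} with rational coefficients; and (2) the image of every curve x·γ_y for x, y ∈ ℚ^{2n+1} with p(y) ≠ 0, where γ_y is the piecewise-linear horizontal curve joining 0 to y consisting of the segment from 0 to (1/2)(a − bc/L², b + ac/L², 0) followed by the segment from there to y = (a,b,c), with L = |p(y)|. -/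
open MeasureTheory Filter Set

noncomputable section

/-- `N` contains every straight line segment which is a horizontal curve and joins two
points of `ℚ^{2n+1}`. -/
def ContainsRatLines (n : ℕ) (N : Set (H n)) : Prop :=
  ∀ x y : H n, Heis.isRat n x → Heis.isRat n y →
    Heis.IsHorizontalCurve n (Set.Icc 0 1) (fun t : ℝ => x + t • (y - x)) →
    (fun t : ℝ => x + t • (y - x)) '' Set.Icc 0 1 ⊆ N

/-!
A straight line through a point in a fixed direction is Lebesgue null in dimension `2n + 1 ≥ 2`,
so the countably many lines through two rational points form a null set; by outer regularity it
lies in a null `G_δ` set.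

For the second half, write `ω(u, v) = Σ (u_{a,i} v_{b,i} - u_{b,i} v_{a,i})`. The fibre of `V` at
`P` is `{w | w_c = 2 ω(w, P)}`, and `t ↦ P + t w` is a horizontal curve as soon as `w` lies in this
fibre (it then lies in the fibre at every point of the line). A horizontal line with rational data
is covered by the horizontal segments from `P - c w` to `P + c w`, `c ∈ ℕ`. Left translation by `x`
is affine, `x · (z + s w) = x · z + s (x · w - x)`, maps the fibre at `z` into the fibre at `x · z`
and preserves rationality, so it maps rational horizontal segments to rational horizontal segments.
Finally, `γ_y` consists of two such segments: `w₁` has vanishing vertical component and the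
segment starts at `0`, while `w₂` lies in the fibre at `w₁ / 2` because `ω(w₂, w₁) = 2c`.
-/

open scoped ENNReal

lemma MeasureTheory.Measure.addHaar_range_add_smul {E : Type*} [NormedAddCommGroup E]
    [NormedSpace ℝ E] [MeasurableSpace E] [BorelSpace E] [FiniteDimensional ℝ E]
    (μ : Measure E) [μ.IsAddHaarMeasure] (hE : 1 < Module.finrank ℝ E) (x v : E) :
    μ (range fun t : ℝ => x + t • v) = 0 := by
  refine measure_mono_null ?_ (addHaar_affineSubspace μ (AffineSubspace.mk' x (ℝ ∙ v)) ?_)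
  · rintro _ ⟨t, rfl⟩
    simpa [AffineSubspace.mem_mk'] using Submodule.smul_mem _ t (Submodule.mem_span_singleton_self v)
  · intro h
    have hdir := congrArg AffineSubspace.direction h
    rw [AffineSubspace.direction_mk', AffineSubspace.direction_top] at hdir
    have : Module.finrank ℝ (ℝ ∙ v) ≤ 1 := by simpa using finrank_span_le_card ({v} : Set E)
    rw [hdir, finrank_top] at this
    omega

lemma MeasureTheory.Measure.exists_iInter_isOpen_superset_of_null {α : Type*}
    [TopologicalSpace α] [MeasurableSpace α] {μ : Measure α} [μ.OuterRegular] {s : Set α}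
    (hs : μ s = 0) : ∃ U : ℕ → Set α, (∀ k, IsOpen (U k)) ∧ s ⊆ ⋂ k, U k ∧ μ (⋂ k, U k) = 0 := by
  have hU (k : ℕ) : ∃ U ⊇ s, IsOpen U ∧ μ U < (k : ℝ≥0∞)⁻¹ :=
    s.exists_isOpen_lt_of_lt _ (by simp [hs])
  choose U hsU hUo hUμ using hU
  refine ⟨U, hUo, subset_iInter hsU, ?_⟩
  by_contra h
  obtain ⟨k, hk⟩ := ENNReal.exists_inv_nat_lt h
  exact hk.not_ge ((measure_mono (iInter_subset U k)).trans (hUμ k).le)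

namespace Heis

variable {n : ℕ}

@[simp] lemma idx₁_inj {i j : Fin n} : idx₁ n i = idx₁ n j ↔ i = j := by
  simp [idx₁, Fin.ext_iff]

@[simp] lemma idx₂_inj {i j : Fin n} : idx₂ n i = idx₂ n j ↔ i = j := by
  simp [idx₂, Fin.ext_iff]

@[simp] lemma idx₁_ne_idx₂ (i j : Fin n) : idx₁ n i ≠ idx₂ n j := by
  simp only [idx₁, idx₂, ne_eq, Fin.ext_iff]; omega

@[simp] lemma idx₁_ne_idxc (i : Fin n) : idx₁ n i ≠ idxc n := by
  simp only [idx₁, idxc, ne_eq, Fin.ext_iff]; omega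

@[simp] lemma idx₂_ne_idxc (i : Fin n) : idx₂ n i ≠ idxc n := by
  simp only [idx₂, idxc, ne_eq, Fin.ext_iff]; omega

lemma idx_cases (k : Fin (2*n+1)) :
    (∃ j, k = idx₁ n j) ∨ (∃ j, k = idx₂ n j) ∨ k = idxc n := by
  rcases k with ⟨k, hk⟩
  by_cases h₁ : k < n
  · exact Or.inl ⟨⟨k, h₁⟩, rfl⟩
  by_cases h₂ : k < 2*n
  · exact Or.inr (Or.inl ⟨⟨k - n, by omega⟩, Fin.ext (show k = n + (k - n) by omega)⟩)
  · exact Or.inr (Or.inr (Fin.ext (show k = 2 * n by omega)))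

@[simp] lemma mkH_idx₁ (a b : Fin n → ℝ) (c : ℝ) (j : Fin n) : mkH n a b c (idx₁ n j) = a j := by
  simp [mkH, idx₁]

@[simp] lemma mkH_idx₂ (a b : Fin n → ℝ) (c : ℝ) (j : Fin n) : mkH n a b c (idx₂ n j) = b j := by
  have : n + j < 2 * n := by omega
  simp [mkH, idx₂, this]

@[simp] lemma mkH_idxc (a b : Fin n → ℝ) (c : ℝ) : mkH n a b c (idxc n) = c := by
  have : ¬ 2 * n < n := by omega
  simp [mkH, idxc, this]

lemma ext_idx {x y : H n} (h₁ : ∀ j, x (idx₁ n j) = y (idx₁ n j))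
    (h₂ : ∀ j, x (idx₂ n j) = y (idx₂ n j)) (hc : x (idxc n) = y (idxc n)) : x = y := by
  ext k
  rcases idx_cases k with ⟨j, rfl⟩ | ⟨j, rfl⟩ | rfl
  exacts [h₁ j, h₂ j, hc]

lemma sum_Xvf_Yvf (a b : Fin n → ℝ) (z : H n) :
    ∑ i, (a i • Xvf n i z + b i • Yvf n i z)
      = mkH n a b (2 * ∑ i, (a i * z (idx₂ n i) - b i * z (idx₁ n i))) := by
  refine ext_idx (fun j => ?_) (fun j => ?_) ?_
  · simp [Xvf, Yvf, Pi.single_apply, Finset.sum_add_distrib]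
  · simp [Xvf, Yvf, Pi.single_apply, Finset.sum_add_distrib]
  · simp [Xvf, Yvf, Finset.sum_add_distrib, mul_left_comm _ (2 : ℝ), Finset.mul_sum, mul_sub,
      ← sub_eq_add_neg]

def symp (u v : H n) : ℝ := ∑ i, (u (idx₁ n i) * v (idx₂ n i) - u (idx₂ n i) * v (idx₁ n i))

lemma symp_add_left (u u' v : H n) : symp (u + u') v = symp u v + symp u' v := by
  simp only [symp, PiLp.add_apply, ← Finset.sum_add_distrib]
  exact Finset.sum_congr rfl fun _ _ => by ring

lemma symp_smul_left (c : ℝ) (u v : H n) : symp (c • u) v = c * symp u v := by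
  simp only [symp, PiLp.smul_apply, smul_eq_mul, Finset.mul_sum]
  exact Finset.sum_congr rfl fun _ _ => by ring

lemma symp_comm (u v : H n) : symp u v = -symp v u := by
  simp only [symp, ← Finset.sum_neg_distrib]
  exact Finset.sum_congr rfl fun _ _ => by ring

lemma symp_add_right (u v v' : H n) : symp u (v + v') = symp u v + symp u v' := by
  rw [symp_comm, symp_add_left, symp_comm v, symp_comm v']; ring

lemma symp_smul_right (c : ℝ) (u v : H n) : symp u (c • v) = c * symp u v := by
  rw [symp_comm, symp_smul_left, symp_comm v]; ring

lemma symp_self (u : H n) : symp u u = 0 := by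
  linarith [symp_comm u u]

@[simp] lemma symp_mkH_left (a b : Fin n → ℝ) (c : ℝ) (v : H n) :
    symp (mkH n a b c) v = ∑ i, (a i * v (idx₂ n i) - b i * v (idx₁ n i)) := by
  simp [symp]

@[simp] lemma Hmul_idx₁ (x z : H n) (j : Fin n) :
    Hmul n x z (idx₁ n j) = x (idx₁ n j) + z (idx₁ n j) := by
  have : (j : ℕ) ≠ 2 * n := by omega
  simp [Hmul, idx₁, this]

@[simp] lemma Hmul_idx₂ (x z : H n) (j : Fin n) :
    Hmul n x z (idx₂ n j) = x (idx₂ n j) + z (idx₂ n j) := by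
  have : n + j ≠ 2 * n := by omega
  simp [Hmul, idx₂, this]

@[simp] lemma Hmul_idxc (x z : H n) :
    Hmul n x z (idxc n) = x (idxc n) + z (idxc n) - 2 * symp x z := by
  simp [Hmul, idxc, symp]

/-- The fibre `span {X_i(P), Y_i(P)}` of `V` at `P`. -/
def horizontalSpace (P : H n) : Submodule ℝ (H n) where
  carrier := {w | w (idxc n) = 2 * symp w P}
  add_mem' {u v} hu hv := by
    simp only [Set.mem_ofPred_eq, PiLp.add_apply, symp_add_left] at *
    rw [hu, hv]; ring
  zero_mem' := by simp [symp]
  smul_mem' c u hu := by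
    simp only [Set.mem_ofPred_eq, PiLp.smul_apply, smul_eq_mul, symp_smul_left] at *
    rw [hu]; ring

lemma mem_horizontalSpace {P w : H n} : w ∈ horizontalSpace P ↔ w (idxc n) = 2 * symp w P :=
  Iff.rfl

lemma mem_horizontalSpace_add_smul {P w : H n} (hw : w ∈ horizontalSpace P) (s : ℝ) :
    w ∈ horizontalSpace (P + s • w) := by
  rwa [mem_horizontalSpace, symp_add_right, symp_smul_right, symp_self, mul_zero, add_zero]

lemma sum_Xvf_Yvf_mem_horizontalSpace (a b : Fin n → ℝ) (z : H n) :
    ∑ i, (a i • Xvf n i z + b i • Yvf n i z) ∈ horizontalSpace z := by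
  simp [mem_horizontalSpace, sum_Xvf_Yvf]

lemma sum_Xvf_Yvf_of_mem_horizontalSpace {z w : H n} (hw : w ∈ horizontalSpace z) :
    ∑ i, (w (idx₁ n i) • Xvf n i z + w (idx₂ n i) • Yvf n i z) = w := by
  rw [sum_Xvf_Yvf]
  refine ext_idx (fun j => ?_) (fun j => ?_) ?_
  · simp
  · simp
  · simp [mem_horizontalSpace.1 hw, symp]

lemma isHorizontalCurve_line (I : Set ℝ) {P w : H n} (hw : w ∈ horizontalSpace P) :
    IsHorizontalCurve n I (fun t : ℝ => P + t • w) := by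
  have hderiv : ∀ t : ℝ, HasDerivAt (fun t : ℝ => P + t • w) w t := fun t => by
    simpa using ((hasDerivAt_id t).smul_const w).const_add P
  have hde : deriv (fun t : ℝ => P + t • w) = fun _ => w := funext fun t => (hderiv t).deriv
  refine ⟨⟨.of_forall fun t => (hderiv t).differentiableAt, fun s _ t _ => ?_⟩,
    ⟨fun _ j => w ⟨j, by omega⟩, .of_forall fun t => ?_⟩⟩
  · rw [hde, intervalIntegral.integral_const]
    exact ⟨intervalIntegrable_const, by module⟩
  · rw [horizCondition, hde]
    exact (sum_Xvf_Yvf_of_mem_horizontalSpace (mem_horizontalSpace_add_smul hw t)).symm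

lemma Hmul_add_smul (x z w : H n) (s : ℝ) :
    Hmul n x (z + s • w) = Hmul n x z + s • (Hmul n x w - x) := by
  refine ext_idx (fun j => ?_) (fun j => ?_) ?_
  · simp only [Hmul_idx₁, PiLp.add_apply, PiLp.smul_apply, smul_eq_mul, PiLp.sub_apply]; ring
  · simp only [Hmul_idx₂, PiLp.add_apply, PiLp.smul_apply, smul_eq_mul, PiLp.sub_apply]; ring
  · simp only [Hmul_idxc, PiLp.add_apply, PiLp.smul_apply, smul_eq_mul, PiLp.sub_apply,
      symp_add_right, symp_smul_right]
    ring

lemma Hmul_sub_mem_horizontalSpace (x : H n) {z w : H n} (hw : w ∈ horizontalSpace z) :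
    Hmul n x w - x ∈ horizontalSpace (Hmul n x z) := by
  -- `symp` only reads the horizontal coordinates, on which `Hmul n x` is translation by `x`
  have hsymp : symp (Hmul n x w - x) (Hmul n x z) = symp w (x + z) := by
    simp [symp]
  rw [mem_horizontalSpace] at *
  simp only [PiLp.sub_apply, Hmul_idxc, hsymp, symp_add_right, hw, symp_comm x w]
  ring

lemma isRat_iff_mem_bot {x : H n} : isRat n x ↔ ∀ k, x k ∈ (⊥ : Subfield ℝ) := by
  simp [isRat, Subfield.bot_eq_of_charZero, eq_comm]

lemma isRat_zero : isRat n 0 := isRat_iff_mem_bot.2 fun _ => zero_mem _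

lemma isRat_add {x y : H n} (hx : isRat n x) (hy : isRat n y) : isRat n (x + y) :=
  isRat_iff_mem_bot.2 fun k => add_mem (isRat_iff_mem_bot.1 hx k) (isRat_iff_mem_bot.1 hy k)

lemma isRat_sub {x y : H n} (hx : isRat n x) (hy : isRat n y) : isRat n (x - y) :=
  isRat_iff_mem_bot.2 fun k => sub_mem (isRat_iff_mem_bot.1 hx k) (isRat_iff_mem_bot.1 hy k)

lemma isRat_smul {c : ℝ} (hc : c ∈ (⊥ : Subfield ℝ)) {x : H n} (hx : isRat n x) :
    isRat n (c • x) :=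
  isRat_iff_mem_bot.2 fun k => mul_mem hc (isRat_iff_mem_bot.1 hx k)

lemma isRat_mkH {a b : Fin n → ℝ} {c : ℝ} (ha : ∀ i, a i ∈ (⊥ : Subfield ℝ))
    (hb : ∀ i, b i ∈ (⊥ : Subfield ℝ)) (hc : c ∈ (⊥ : Subfield ℝ)) : isRat n (mkH n a b c) := by
  refine isRat_iff_mem_bot.2 fun k => ?_
  rcases idx_cases k with ⟨j, rfl⟩ | ⟨j, rfl⟩ | rfl
  · simpa using ha j
  · simpa using hb j
  · simpa using hc

lemma symp_mem_bot {u v : H n} (hu : isRat n u) (hv : isRat n v) :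
    symp u v ∈ (⊥ : Subfield ℝ) := by
  rw [isRat_iff_mem_bot] at hu hv
  exact sum_mem fun i _ => sub_mem (mul_mem (hu _) (hv _)) (mul_mem (hu _) (hv _))

lemma isRat_Hmul {x z : H n} (hx : isRat n x) (hz : isRat n z) : isRat n (Hmul n x z) := by
  have hsymp := symp_mem_bot hx hz
  rw [isRat_iff_mem_bot] at *
  intro k
  rcases idx_cases k with ⟨j, rfl⟩ | ⟨j, rfl⟩ | rfl
  · simpa using add_mem (hx _) (hz _)
  · simpa using add_mem (hx _) (hz _)
  · simpa using sub_mem (add_mem (hx _) (hz _)) (mul_mem (ofNat_mem _ 2) hsymp)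

lemma isRat_sum_Xvf_Yvf {a b : Fin n → ℝ} (ha : ∀ i, a i ∈ (⊥ : Subfield ℝ))
    (hb : ∀ i, b i ∈ (⊥ : Subfield ℝ)) {z : H n} (hz : isRat n z) :
    isRat n (∑ i, (a i • Xvf n i z + b i • Yvf n i z)) := by
  rw [isRat_iff_mem_bot] at hz
  rw [sum_Xvf_Yvf]
  exact isRat_mkH ha hb (mul_mem (ofNat_mem _ 2)
    (sum_mem fun i _ => sub_mem (mul_mem (ha i) (hz _)) (mul_mem (hb i) (hz _))))

lemma norm_proj_sq (y : H n) :
    ‖proj n y‖ ^ 2 = ∑ i, (y (idx₁ n i) ^ 2 + y (idx₂ n i) ^ 2) := by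
  rw [EuclideanSpace.norm_sq_eq, Fintype.sum_equiv (finCongr (two_mul n)) _
    (fun j : Fin (n + n) => y ⟨j, by omega⟩ ^ 2) fun j => by simp [proj],
    Fin.sum_univ_add, ← Finset.sum_add_distrib]
  rfl

lemma norm_proj_sq_mem_bot {y : H n} (hy : isRat n y) : ‖proj n y‖ ^ 2 ∈ (⊥ : Subfield ℝ) := by
  rw [isRat_iff_mem_bot] at hy
  rw [norm_proj_sq]
  exact sum_mem fun i _ => add_mem (pow_mem (hy _) 2) (pow_mem (hy _) 2)

lemma isRat_w₁ {y : H n} (hy : isRat n y) : isRat n (w₁ n y) := by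
  have hL := norm_proj_sq_mem_bot hy
  rw [isRat_iff_mem_bot] at hy
  exact isRat_mkH (fun i => sub_mem (hy _) (div_mem (mul_mem (hy _) (hy _)) hL))
    (fun i => add_mem (hy _) (div_mem (mul_mem (hy _) (hy _)) hL)) (zero_mem _)

lemma isRat_w₂ {y : H n} (hy : isRat n y) : isRat n (w₂ n y) := by
  have hL := norm_proj_sq_mem_bot hy
  rw [isRat_iff_mem_bot] at hy
  exact isRat_mkH (fun i => add_mem (hy _) (div_mem (mul_mem (hy _) (hy _)) hL))
    (fun i => sub_mem (hy _) (div_mem (mul_mem (hy _) (hy _)) hL)) (mul_mem (ofNat_mem _ 2) (hy _))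

lemma w₁_mem_horizontalSpace_zero (y : H n) : w₁ n y ∈ horizontalSpace 0 := by
  simp [mem_horizontalSpace, w₁]

lemma symp_w₂_w₁ {y : H n} (hy : proj n y ≠ 0) : symp (w₂ n y) (w₁ n y) = 2 * y (idxc n) := by
  have hL : ‖proj n y‖ ^ 2 ≠ 0 := by positivity
  calc symp (w₂ n y) (w₁ n y)
      = (∑ i, (y (idx₁ n i) ^ 2 + y (idx₂ n i) ^ 2)) * (2 * y (idxc n) / ‖proj n y‖ ^ 2) := by
        simp only [w₂, w₁, symp_mkH_left, mkH_idx₁, mkH_idx₂, Finset.sum_mul]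
        exact Finset.sum_congr rfl fun _ _ => by ring
    _ = 2 * y (idxc n) := by rw [← norm_proj_sq]; field_simp

lemma w₂_mem_horizontalSpace {y : H n} (hy : proj n y ≠ 0) :
    w₂ n y ∈ horizontalSpace ((1 / 2 : ℝ) • w₁ n y) := by
  rw [mem_horizontalSpace, symp_smul_right, symp_w₂_w₁ hy]
  simp [w₂]

lemma countable_setOf_isRat : {x : H n | isRat n x}.Countable := by
  refine (countable_range fun f : Fin (2*n+1) → ℚ => (WithLp.toLp 2 fun k => (f k : ℝ) : H n)).mono
    fun x hx => ?_
  choose f hf using hx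
  exact ⟨f, by ext k; exact (hf k).symm⟩

lemma exists_null_Gδ_containsRatLines (hn : 0 < n) :
    ∃ N : Set (H n), volume N = 0 ∧
      (∃ U : ℕ → Set (H n), (∀ k, IsOpen (U k)) ∧ N = ⋂ k, U k) ∧ ContainsRatLines n N := by
  set S := ⋃ x ∈ {x : H n | isRat n x}, ⋃ y ∈ {y : H n | isRat n y},
    range fun t : ℝ => x + t • (y - x)
  have hS : volume S = 0 := by
    refine (measure_biUnion_null_iff countable_setOf_isRat).2 fun x _ =>
      (measure_biUnion_null_iff countable_setOf_isRat).2 fun y _ =>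
        volume.addHaar_range_add_smul ?_ x (y - x)
    rw [finrank_euclideanSpace_fin]
    omega
  obtain ⟨U, hUo, hSU, hU⟩ := Measure.exists_iInter_isOpen_superset_of_null hS
  refine ⟨⋂ k, U k, hU, ⟨U, hUo, rfl⟩, fun x y hx hy _ => ?_⟩
  rintro _ ⟨t, -, rfl⟩
  exact hSU (mem_biUnion hx (mem_biUnion hy ⟨t, rfl⟩))

end Heis

namespace ContainsRatLines

open Heis

variable {n : ℕ} {N : Set (H n)}

lemma segment_subset (hN : ContainsRatLines n N) {P w : H n} (hP : isRat n P) (hw : isRat n w)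
    (hPw : w ∈ horizontalSpace P) : (fun s : ℝ => P + s • w) '' Icc 0 1 ⊆ N := by
  have := hN P (P + w) hP (isRat_add hP hw)
  simp only [add_sub_cancel_left] at this
  exact this (isHorizontalCurve_line _ hPw)

lemma range_subset (hN : ContainsRatLines n N) {P w : H n} (hP : isRat n P) (hw : isRat n w)
    (hPw : w ∈ horizontalSpace P) : range (fun t : ℝ => P + t • w) ⊆ N := by
  rintro _ ⟨t, rfl⟩
  obtain ⟨c, hct⟩ := exists_nat_gt |t|
  obtain ⟨htl, htr⟩ := abs_lt.1 hct
  have hc : (c : ℝ) ∈ (⊥ : Subfield ℝ) := natCast_mem _ c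
  have hc₀ : (0 : ℝ) < c := (abs_nonneg t).trans_lt hct
  -- the segment from `P - c w` to `P + c w` passes through `P + t w`
  refine hN.segment_subset (isRat_add hP (isRat_smul (neg_mem hc) hw))
    (isRat_smul (mul_mem (ofNat_mem _ 2) hc) hw)
    (Submodule.smul_mem _ _ (mem_horizontalSpace_add_smul hPw _))
    ⟨(t + c) / (2 * c), ⟨div_nonneg (by linarith) (by positivity), ?_⟩, ?_⟩
  · rw [div_le_one (by positivity)]; linarith
  · dsimp only
    rw [smul_smul, div_mul_cancel₀ _ (by positivity)]
    module

lemma Hmul_segment_subset (hN : ContainsRatLines n N) {x z w : H n} (hx : isRat n x)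
    (hz : isRat n z) (hw : isRat n w) (hzw : w ∈ horizontalSpace z) :
    (fun s : ℝ => Hmul n x (z + s • w)) '' Icc 0 1 ⊆ N := by
  simp_rw [Hmul_add_smul]
  exact hN.segment_subset (isRat_Hmul hx hz) (isRat_sub (isRat_Hmul hx hw) hx)
    (Hmul_sub_mem_horizontalSpace x hzw)

lemma Hmul_goodCurve_subset (hN : ContainsRatLines n N) {x y : H n} (hx : isRat n x)
    (hy : isRat n y) (hpy : proj n y ≠ 0) :
    (fun t : ℝ => Hmul n x (goodCurve n y t)) '' Icc 0 1 ⊆ N := by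
  rintro _ ⟨t, ⟨ht₀, ht₁⟩, rfl⟩
  rcases le_or_gt t (1 / 2) with ht | ht
  · refine hN.Hmul_segment_subset hx isRat_zero (isRat_w₁ hy) (w₁_mem_horizontalSpace_zero y)
      ⟨t, ⟨ht₀, ht₁⟩, ?_⟩
    simp only [goodCurve, if_pos ht, zero_add]
  · refine hN.Hmul_segment_subset hx (isRat_smul ?_ (isRat_w₁ hy)) (isRat_w₂ hy)
      (w₂_mem_horizontalSpace hpy) ⟨t - 1 / 2, ⟨by linarith, by linarith⟩, ?_⟩
    · exact div_mem (one_mem _) (ofNat_mem _ 2)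
    · simp only [goodCurve, if_neg ht.not_ge]

end ContainsRatLines

/-- Lemma `uds`. There is a Lebesgue measure zero `G_δ` set
`N ⊂ ℍⁿ` containing all straight lines which are horizontal curves joining pairs of
points of `ℚ^{2n+1}`; moreover any such set contains (1) the image of the line
`t ↦ x + tE(x)` for rational `x` and rational `E ∈ V`, and (2) the image of each curve
`x·γ_y` for rational `x, y` with `p(y) ≠ 0`. -/
theorem statement8 (n : ℕ) (hn : 0 < n) :
    (∃ N : Set (H n), volume N = 0 ∧
      (∃ U : ℕ → Set (H n), (∀ k, IsOpen (U k)) ∧ N = ⋂ k, U k) ∧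
      ContainsRatLines n N) ∧
    (∀ N : Set (H n), volume N = 0 →
      (∃ U : ℕ → Set (H n), (∀ k, IsOpen (U k)) ∧ N = ⋂ k, U k) →
      ContainsRatLines n N →
      ((∀ (x : H n) (E : H n → H n), Heis.isRat n x →
        (∃ q q' : Fin n → ℚ, ∀ z, E z = ∑ i,
          ((q i : ℝ) • Heis.Xvf n i z + (q' i : ℝ) • Heis.Yvf n i z)) →
        Set.range (fun t : ℝ => x + t • E x) ⊆ N) ∧
      (∀ x y : H n, Heis.isRat n x → Heis.isRat n y → Heis.proj n y ≠ 0 →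
        (fun t : ℝ => Heis.Hmul n x (Heis.goodCurve n y t)) '' Set.Icc 0 1 ⊆ N))) := by
  refine ⟨Heis.exists_null_Gδ_containsRatLines hn, fun N _ _ hN => ⟨?_, ?_⟩⟩
  · rintro x E hx ⟨q, q', hE⟩
    rw [hE x]
    exact hN.range_subset hx
      (Heis.isRat_sum_Xvf_Yvf (fun i => SubfieldClass.ratCast_mem _ _)
        (fun i => SubfieldClass.ratCast_mem _ _) hx)
      (Heis.sum_Xvf_Yvf_mem_horizontalSpace _ _ x)
  · exact fun x y hx hy hpy => hN.Hmul_goodCurve_subset hx hy hpy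
end
end
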